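/- Let T be an abelian regular subgroup of Aff(V) with δ defined as the linear part minus identity of the unique element τ(x) ∈ T sending 0 to x. Then τ(x)·τ(y) = τ(x + y + x·δ(y)) for all x, y ∈ V. -/
import Mathlib


theorem stmt {F V : Type*} [Field F] [AddCommGroup V] [Module F V]
    (T : Subgroup (V ≃ᵃ[F] V))
    (hcomm : ∀ g ∈ T, ∀ h ∈ T, g * h = h * g)
    (hreg : ∀ v : V, ∃! g : V ≃ᵃ[F] V, g ∈ T ∧ g 0 = v)
    (τ : V → (V ≃ᵃ[F] V)) (hτT : ∀ x, τ x ∈ T) (hτ0 : ∀ x, τ x 0 = x)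
    (δ : V → Module.End F V)
    (hδ : ∀ x z, τ x z = z + δ x z + x) :
    ∀ x y : V, τ x * τ y = τ (x + y + δ y x) := by
  intro x y
  have key : ∀ a b : V, (τ a * τ b) 0 = b + δ a b + a := by
    intro a b
    have : (τ a * τ b) 0 = τ a (τ b 0) := rfl
    rw [this, hτ0, hδ]
  have hsym : y + δ x y + x = x + δ y x + y := by
    have h := hcomm _ (hτT x) _ (hτT y)
    have h2 := congrArg (fun g : V ≃ᵃ[F] V => g 0) h
    simpa [key] using h2
  obtain ⟨g, hg, hu⟩ := hreg (x + y + δ y x)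
  have h1 := hu (τ x * τ y) ⟨T.mul_mem (hτT x) (hτT y), by rw [key, hsym]; abel⟩
  have h2 := hu (τ (x + y + δ y x)) ⟨hτT _, hτ0 _⟩
  rw [h1, h2]
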